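/- Let X be a real infinite-dimensional Banach space with a shrinking Schauder basis (x_n)_{n=1}^∞ with basis constant K. Then wck_X(B_X) ≤ (K+1)²·bc₂((x_n)). -/

import Mathlib

/-! If `z` is a weak*-cluster point of a sequence in `B_X`, then `‖z‖ ≤ 1`, and the partial
sums `sₙ = ∑_{i<n} z(x*ᵢ) xᵢ` satisfy `ca (sₙ) ≤ bc₂` because `z|_V ∈ B_{V*}`. For a shrinking
basis `g ∘ Pₙ → g` in norm for every `g ∈ X*`, so `z(g) = lim g(sₖ)` and
`‖z - s_N‖ ≤ sup_{k ≥ N} ‖sₖ - s_N‖`, which is at most `ca (sₙ) + ε` for a suitable `N`.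
Hence already `wck_X(B_X) ≤ bc₂`. -/

open Filter Metric NormedSpace Set Topology

noncomputable section

variable {E : Type*} [NormedAddCommGroup E] [NormedSpace ℝ E]

/-- `f` is the sequence of coordinate functionals of the Schauder basis `x`:
every vector has an expansion along `x`, and such expansions are unique. -/
structure IsSchauderBasis (x : ℕ → E) (f : ℕ → E →L[ℝ] ℝ) : Prop where
  expand : ∀ v : E,
    Tendsto (fun n => ∑ i ∈ Finset.range n, f i v • x i) atTop (𝓝 v)
  unique : ∀ (a : ℕ → ℝ) (v : E),
    Tendsto (fun n => ∑ i ∈ Finset.range n, a i • x i) atTop (𝓝 v) → ∀ i, a i = f i v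

/-- the `n`-th basis projection `P_n`. -/
def basisProj (x : ℕ → E) (f : ℕ → E →L[ℝ] ℝ) (n : ℕ) : E →L[ℝ] E :=
  ∑ i ∈ Finset.range n, (f i).smulRight (x i)

/-- closed linear span of `{y i : i ≥ n}`. -/
def tailSpan (y : ℕ → E) (n : ℕ) : Submodule ℝ E :=
  (Submodule.span ℝ (y '' {i | n ≤ i})).topologicalClosure

/-- `‖g‖_n` : the norm of the restriction of `g` to the closed span of the tail of `y`. -/
def tailNorm (y : ℕ → E) (g : E →L[ℝ] ℝ) (n : ℕ) : ℝ :=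
  ‖g.comp (tailSpan y n).subtypeL‖

/-- the quantity `sh` measuring how far a basic sequence is from being shrinking. -/
def sh (y : ℕ → E) : ℝ :=
  sSup ((fun g : E →L[ℝ] ℝ => limsup (tailNorm y g) atTop) '' {g | ‖g‖ ≤ 1})

/-- non-symmetrised Hausdorff distance `d̂(A,B)`. -/
def hdist (A B : Set E) : ℝ := sSup ((fun a => infDist a B) '' A)

/-- ordinary distance between two sets. -/
def setDist (A B : Set E) : ℝ := sInf {d : ℝ | ∃ a ∈ A, ∃ b ∈ B, d = dist a b}

/-- `ca` measures how far a sequence is from being norm-Cauchy. -/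
def ca (z : ℕ → E) : ℝ :=
  ⨅ n : ℕ, sSup {d : ℝ | ∃ k, n ≤ k ∧ ∃ l, n ≤ l ∧ d = ‖z k - z l‖}

/-- measure of non-separability. -/
def sep (A : Set E) : ℝ :=
  sInf {ε : ℝ | 0 < ε ∧ ∃ C : Set E, C.Countable ∧ ∀ a ∈ A, ∃ c ∈ C, ‖a - c‖ ≤ ε}

/-- `V`: the closed linear span of the coordinate functionals. -/
def dualSpan (g : ℕ → E →L[ℝ] ℝ) : Submodule ℝ (StrongDual ℝ E) :=
  (Submodule.span ℝ (Set.range g)).topologicalClosure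

lemma mem_dualSpan (g : ℕ → E →L[ℝ] ℝ) (i : ℕ) : g i ∈ dualSpan g :=
  Submodule.le_topologicalClosure _ (Submodule.subset_span ⟨i, rfl⟩)

/-- the quantity `bc₁` measuring non-bounded-completeness. -/
def bc1 (y : ℕ → E) : ℝ :=
  sSup {c : ℝ | ∃ a : ℕ → ℝ,
    (∀ n, ‖∑ i ∈ Finset.range n, a i • y i‖ ≤ 1) ∧
    c = ca (fun n => ∑ i ∈ Finset.range n, a i • y i)}

/-- the quantity `bc₂`. -/
def bc2 (y : ℕ → E) (g : ℕ → E →L[ℝ] ℝ) : ℝ :=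
  sSup {c : ℝ | ∃ φ : ↥(dualSpan g) →L[ℝ] ℝ,
    @Norm.norm _ (@ContinuousLinearMap.hasOpNorm ℝ ℝ (dualSpan g) ℝ _ _ _ _ _ _ _) φ ≤ 1 ∧
    c = ca (fun n => ∑ i ∈ Finset.range n, φ ⟨g i, mem_dualSpan g i⟩ • y i)}

/-- the quantity `bc₃`. -/
def bc3 (y : ℕ → E) (g : ℕ → E →L[ℝ] ℝ) : ℝ :=
  sSup {c : ℝ | ∃ Φ : StrongDual ℝ (StrongDual ℝ E), ‖Φ‖ ≤ 1 ∧
    c = ca (fun n => ∑ i ∈ Finset.range n, Φ (g i) • y i)}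

/-- `α_Y(X)`: measures how well `Y` embeds isomorphically into `X`. -/
def alpha (Y X : Type*) [NormedAddCommGroup Y] [NormedSpace ℝ Y]
    [NormedAddCommGroup X] [NormedSpace ℝ X] : ℝ :=
  sSup {c : ℝ | ∃ T : Y →L[ℝ] X, ‖T‖ ≤ 1 ∧ ∀ y : Y, c * ‖y‖ ≤ ‖T y‖}

/-- `β_Y(X)`: measures how well `Y` embeds complementably into `X`. -/
def beta (Y X : Type*) [NormedAddCommGroup Y] [NormedSpace ℝ Y]
    [NormedAddCommGroup X] [NormedSpace ℝ X] : ℝ :=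
  sSup {c : ℝ | ∃ (A : X →L[ℝ] Y) (B : Y →L[ℝ] X),
    A.comp B = ContinuousLinearMap.id ℝ Y ∧ c * (‖A‖ * ‖B‖) ≤ 1}

/-- weak-star closure of a subset of the bidual. -/
def wstarClosure {X : Type*} [NormedAddCommGroup X] [NormedSpace ℝ X]
    (S : Set (StrongDual ℝ (StrongDual ℝ X))) : Set (StrongDual ℝ (StrongDual ℝ X)) :=
  {z | StrongDual.toWeakDual z ∈ closure (StrongDual.toWeakDual '' S)}

/-- the measure of weak non-compactness `wk_X(A)`. -/
def wk (X : Type*) [NormedAddCommGroup X] [NormedSpace ℝ X] (A : Set X) : ℝ :=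
  hdist (wstarClosure ((inclusionInDoubleDual ℝ X) '' A))
    (Set.range (inclusionInDoubleDual ℝ X))

/-- weak-star cluster points in the bidual of a sequence in `X`. -/
def wclust {X : Type*} [NormedAddCommGroup X] [NormedSpace ℝ X] (u : ℕ → X) :
    Set (StrongDual ℝ (StrongDual ℝ X)) :=
  {z | MapClusterPt (StrongDual.toWeakDual z) atTop
      (fun n => StrongDual.toWeakDual (inclusionInDoubleDual ℝ X (u n)))}

/-- the measure of weak non-compactness `wck_X(A)`. -/
def wck (X : Type*) [NormedAddCommGroup X] [NormedSpace ℝ X] (A : Set X) : ℝ :=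
  sSup {c : ℝ | ∃ u : ℕ → X, (∀ n, u n ∈ A) ∧
    c = setDist (wclust u) (Set.range (inclusionInDoubleDual ℝ X))}


/-- the canonical map `j : X → V*` for a subspace `V` of the dual,
`⟨j v, x*⟩ = x*(v)`. -/
def jfun {X : Type*} [NormedAddCommGroup X] [NormedSpace ℝ X]
    (V : Submodule ℝ (StrongDual ℝ X)) (v : X) : ↥V →L[ℝ] ℝ :=
  (inclusionInDoubleDual ℝ X v).comp V.subtypeL

/-- the space `ℓ₁` of absolutely summable real sequences. -/
abbrev ell1 : Type := lp (fun _ : ℕ => ℝ) 1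

/-- the space `c₀` of real sequences converging to zero, with the sup norm. -/
abbrev czero : Type := ZeroAtInftyContinuousMap ℕ ℝ

end

noncomputable def partialSum {X : Type*} [NormedAddCommGroup X] [NormedSpace ℝ X] (x : ℕ → X)
    (f : ℕ → X →L[ℝ] ℝ) (w : StrongDual ℝ (StrongDual ℝ X)) (n : ℕ) : X :=
  ∑ i ∈ Finset.range n, w (f i) • x i

section Ca

variable {E : Type*} [NormedAddCommGroup E]

lemma ca_nonneg (z : ℕ → E) : 0 ≤ ca z :=
  Real.iInf_nonneg fun _ => Real.sSup_nonneg <| by rintro _ ⟨k, -, l, -, rfl⟩; positivity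

lemma bddAbove_norm_sub_of_norm_le {z : ℕ → E} {C : ℝ} (hz : ∀ n, ‖z n‖ ≤ C) (n : ℕ) :
    BddAbove {d : ℝ | ∃ k, n ≤ k ∧ ∃ l, n ≤ l ∧ d = ‖z k - z l‖} :=
  ⟨2 * C, by rintro _ ⟨k, -, l, -, rfl⟩; linarith [norm_sub_le (z k) (z l), hz k, hz l]⟩

lemma ca_le_of_norm_le {z : ℕ → E} {C : ℝ} (hz : ∀ n, ‖z n‖ ≤ C) : ca z ≤ 2 * C := by
  calc ca z ≤ sSup {d : ℝ | ∃ k, 0 ≤ k ∧ ∃ l, 0 ≤ l ∧ d = ‖z k - z l‖} := by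
        refine ciInf_le ?_ 0
        refine ⟨0, ?_⟩
        rintro _ ⟨n, rfl⟩
        exact Real.sSup_nonneg <| by rintro _ ⟨k, -, l, -, rfl⟩; positivity
    _ ≤ 2 * C := by
        refine csSup_le ⟨‖z 0 - z 0‖, 0, le_rfl, 0, le_rfl, rfl⟩ ?_
        rintro _ ⟨k, -, l, -, rfl⟩
        linarith [norm_sub_le (z k) (z l), hz k, hz l]

lemma exists_norm_sub_le_ca_add {z : ℕ → E} {C : ℝ} (hz : ∀ n, ‖z n‖ ≤ C) {ε : ℝ}
    (hε : 0 < ε) : ∃ N, ∀ k, N ≤ k → ‖z k - z N‖ ≤ ca z + ε := by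
  obtain ⟨N, hN⟩ := exists_lt_of_ciInf_lt (lt_add_of_pos_right (ca z) hε)
  exact ⟨N, fun k hk =>
    (le_csSup (bddAbove_norm_sub_of_norm_le hz N) ⟨k, hk, N, le_rfl, rfl⟩).trans hN.le⟩

lemma setDist_le_of_forall_exists_dist_le {A B : Set E} {c : ℝ} (hc : 0 ≤ c)
    (h : ∀ a ∈ A, ∀ ε > 0, ∃ b ∈ B, dist a b ≤ c + ε) : setDist A B ≤ c := by
  rcases A.eq_empty_or_nonempty with rfl | ⟨a, ha⟩
  · simpa [setDist] using hc
  refine le_of_forall_pos_le_add fun ε hε => ?_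
  obtain ⟨b, hb, hab⟩ := h a ha ε hε
  have hbdd : BddBelow {d : ℝ | ∃ a ∈ A, ∃ b ∈ B, d = dist a b} :=
    ⟨0, by rintro _ ⟨-, -, -, -, rfl⟩; exact dist_nonneg⟩
  exact (csInf_le hbdd ⟨a, ha, b, hb, rfl⟩).trans hab

end Ca

section SchauderBasis

variable {X : Type*} [NormedAddCommGroup X] [NormedSpace ℝ X] {x : ℕ → X}
  {f : ℕ → X →L[ℝ] ℝ}

@[simp]
lemma basisProj_apply (n : ℕ) (v : X) :
    basisProj x f n v = ∑ i ∈ Finset.range n, f i v • x i := by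
  simp [basisProj]

lemma IsSchauderBasis.exists_norm_basisProj_le [CompleteSpace X]
    (hb : IsSchauderBasis x f) : ∃ C, ∀ n, ‖basisProj x f n‖ ≤ C :=
  banach_steinhaus fun v => by
    obtain ⟨C, hC⟩ := (hb.expand v).norm.bddAbove_range
    exact ⟨C, fun n => by simpa using hC ⟨n, rfl⟩⟩

lemma IsSchauderBasis.coord_apply_basis (hb : IsSchauderBasis x f) (j i : ℕ) :
    f j (x i) = if j = i then 1 else 0 := by
  refine (hb.unique (fun j => if j = i then 1 else 0) (x i) ?_ j).symm
  refine tendsto_atTop_of_eventually_const (i₀ := i + 1) fun n hn => ?_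
  simp [ite_smul, Finset.sum_ite_eq', show i < n by omega]

lemma IsSchauderBasis.coord_comp_basisProj (hb : IsSchauderBasis x f) {i n : ℕ}
    (hin : i < n) : (f i).comp (basisProj x f n) = f i := by
  ext v
  simp [hb.coord_apply_basis, hin]

lemma apply_comp_basisProj (w : StrongDual ℝ (StrongDual ℝ X)) (g : StrongDual ℝ X) (n : ℕ) :
    w (g.comp (basisProj x f n)) = g (partialSum x f w n) := by
  have : g.comp (basisProj x f n) = ∑ i ∈ Finset.range n, g (x i) • f i := by
    ext v
    simp [mul_comm]
  simp [this, partialSum, mul_comm]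

lemma norm_partialSum_le {C : ℝ} (hC : ∀ n, ‖basisProj x f n‖ ≤ C)
    (w : StrongDual ℝ (StrongDual ℝ X)) (n : ℕ) : ‖partialSum x f w n‖ ≤ C * ‖w‖ := by
  have hC0 : 0 ≤ C := (norm_nonneg _).trans (hC 0)
  refine NormedSpace.norm_le_dual_bound ℝ _ (by positivity) fun g => ?_
  rw [← apply_comp_basisProj]
  calc ‖w (g.comp (basisProj x f n))‖ ≤ ‖w‖ * (‖g‖ * ‖basisProj x f n‖) :=
        w.le_opNorm_of_le (g.opNorm_comp_le _)
    _ ≤ ‖w‖ * (‖g‖ * C) := by gcongr; exact hC n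
    _ = C * ‖w‖ * ‖g‖ := by ring

/-- The dual functionals `g` with `g ∘ Pₙ → g` form a closed set, since `g ↦ g ∘ Pₙ` is
equicontinuous; it contains every `x*ᵢ`, hence all of `V`. -/
lemma IsSchauderBasis.tendsto_comp_basisProj (hb : IsSchauderBasis x f) {C : ℝ}
    (hC : ∀ n, ‖basisProj x f n‖ ≤ C) {g : StrongDual ℝ X} (hg : g ∈ dualSpan f) :
    Tendsto (fun n => g.comp (basisProj x f n)) atTop (𝓝 g) := by
  let F : ℕ → StrongDual ℝ X →L[ℝ] StrongDual ℝ X := fun n =>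
    (ContinuousLinearMap.compL ℝ X X ℝ).flip (basisProj x f n)
  have hbound : ∃ C, ∀ n h, ‖F n h‖ ≤ C * ‖h‖ :=
    ⟨C, fun n h => (h.opNorm_comp_le _).trans (by rw [mul_comm]; gcongr; exact hC n)⟩
  have hF : Equicontinuous ((↑) ∘ F) := ((NormedSpace.equicontinuous_TFAE F).out 3 1).mp hbound
  refine closure_minimal (fun h hh => ?_)
    (Equicontinuous.isClosed_setOfPred_tendsto hF continuous_id) hg
  induction hh using Submodule.span_induction with
  | mem h hh =>
    obtain ⟨i, rfl⟩ := hh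
    exact tendsto_atTop_of_eventually_const fun n hn => hb.coord_comp_basisProj hn
  | zero => simp [F]
  | add h₁ h₂ _ _ ih₁ ih₂ => simpa [F, ContinuousLinearMap.add_comp] using ih₁.add ih₂
  | smul a h _ ih => simpa [F, ContinuousLinearMap.smul_comp] using ih.const_smul a

lemma IsSchauderBasis.tendsto_apply_partialSum (hb : IsSchauderBasis x f) {C : ℝ}
    (hC : ∀ n, ‖basisProj x f n‖ ≤ C) (w : StrongDual ℝ (StrongDual ℝ X))
    {g : StrongDual ℝ X} (hg : g ∈ dualSpan f) :
    Tendsto (fun n => g (partialSum x f w n)) atTop (𝓝 (w g)) := by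
  simpa only [Function.comp_def, apply_comp_basisProj] using
    (w.continuous.tendsto g).comp (hb.tendsto_comp_basisProj hC hg)

/-- For a shrinking basis, `w` is the weak*-limit of `J (partialSum x f w n)`. -/
lemma IsSchauderBasis.norm_sub_partialSum_le (hb : IsSchauderBasis x f) {C : ℝ}
    (hC : ∀ n, ‖basisProj x f n‖ ≤ C) (hshr : dualSpan f = ⊤)
    (w : StrongDual ℝ (StrongDual ℝ X)) {N : ℕ} {δ : ℝ}
    (hδ : ∀ k, N ≤ k → ‖partialSum x f w k - partialSum x f w N‖ ≤ δ) :
    ‖w - inclusionInDoubleDual ℝ X (partialSum x f w N)‖ ≤ δ := by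
  refine ContinuousLinearMap.opNorm_le_bound _ ((norm_nonneg _).trans (hδ N le_rfl))
    fun g => ?_
  have hlim := ((hb.tendsto_apply_partialSum hC w (hshr ▸ Submodule.mem_top :
    g ∈ dualSpan f)).sub_const (g (partialSum x f w N))).norm
  refine le_of_tendsto hlim (eventually_atTop.2 ⟨N, fun k hk => ?_⟩)
  rw [← map_sub]
  calc ‖g (partialSum x f w k - partialSum x f w N)‖
      ≤ ‖g‖ * ‖partialSum x f w k - partialSum x f w N‖ := g.le_opNorm _
    _ ≤ ‖g‖ * δ := by gcongr; exact hδ k hk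
    _ = δ * ‖g‖ := mul_comm _ _

lemma bc2_nonneg (x : ℕ → X) (f : ℕ → X →L[ℝ] ℝ) : 0 ≤ bc2 x f :=
  Real.sSup_nonneg <| by rintro _ ⟨φ, -, rfl⟩; exact ca_nonneg _

/-- Every `φ ∈ B_{V*}` extends, by Hahn–Banach, to some `w ∈ B_{X**}` with the same partial
sums, so the set defining `bc₂` is bounded by `2C`. -/
lemma ca_partialSum_le_bc2 {C : ℝ} (hC : ∀ n, ‖basisProj x f n‖ ≤ C)
    {w : StrongDual ℝ (StrongDual ℝ X)} (hw : ‖w‖ ≤ 1) : ca (partialSum x f w) ≤ bc2 x f := by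
  refine le_csSup ⟨2 * C, ?_⟩ ⟨w.comp (dualSpan f).subtypeL, ?_, rfl⟩
  · rintro _ ⟨φ, hφ, rfl⟩
    obtain ⟨w', hw'φ, hw'⟩ := exists_extension_norm_eq (dualSpan f) φ
    have hseq : (fun n => ∑ i ∈ Finset.range n, φ ⟨f i, mem_dualSpan f i⟩ • x i) =
        partialSum x f w' := by
      funext n
      simp [partialSum, ← hw'φ]
    rw [hseq]
    refine ca_le_of_norm_le fun n => (norm_partialSum_le hC w' n).trans ?_
    have hC0 : 0 ≤ C := (norm_nonneg _).trans (hC 0)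
    exact mul_le_of_le_one_right hC0 (hw' ▸ hφ)
  · exact (w.opNorm_comp_le _).trans (mul_le_one₀ hw (norm_nonneg _)
      (Submodule.norm_subtypeL_le _))

end SchauderBasis

lemma norm_le_of_mem_wclust {X : Type*} [NormedAddCommGroup X] [NormedSpace ℝ X]
    {u : ℕ → X} {r : ℝ} (hu : ∀ n, ‖u n‖ ≤ r) {z : StrongDual ℝ (StrongDual ℝ X)}
    (hz : z ∈ wclust u) : ‖z‖ ≤ r := by
  simpa using (WeakDual.isClosed_closedBall 0 r).mem_of_mapClusterPt hz
    (Eventually.of_forall fun n => by simpa using (double_dual_bound ℝ X (u n)).trans (hu n))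

theorem wck_le_bc2_of_shrinking_general {X : Type*} [NormedAddCommGroup X]
    [NormedSpace ℝ X] [CompleteSpace X]
    (x : ℕ → X) (f : ℕ → X →L[ℝ] ℝ) (hb : IsSchauderBasis x f)
    (K : ℝ) (hK : K = ⨆ n : ℕ, ‖basisProj x f n‖)
    (hshr : dualSpan f = ⊤) :
    wck X (Metric.closedBall (0 : X) 1) ≤ (K + 1) ^ 2 * bc2 x f := by
  obtain ⟨C, hC⟩ := hb.exists_norm_basisProj_le
  have hK0 : 0 ≤ K := hK ▸ Real.iSup_nonneg fun _ => norm_nonneg _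
  have hbc2 := bc2_nonneg x f
  have hdist : ∀ u : ℕ → X, (∀ n, u n ∈ closedBall 0 1) →
      setDist (wclust u) (range (inclusionInDoubleDual ℝ X)) ≤ bc2 x f := by
    refine fun u hu => setDist_le_of_forall_exists_dist_le hbc2 fun z hz ε hε => ?_
    have hz1 : ‖z‖ ≤ 1 := norm_le_of_mem_wclust (fun n => by simpa using hu n) hz
    obtain ⟨N, hN⟩ := exists_norm_sub_le_ca_add (norm_partialSum_le hC z) hε
    refine ⟨_, ⟨partialSum x f z N, rfl⟩, ?_⟩
    rw [dist_eq_norm]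
    exact (hb.norm_sub_partialSum_le hC hshr z hN).trans
      (add_le_add_left (ca_partialSum_le_bc2 hC hz1) ε)
  refine Real.sSup_le (fun _ ⟨u, hu, hc⟩ => hc ▸ (hdist u hu).trans ?_) (by positivity)
  exact le_mul_of_one_le_left hbc2 (one_le_pow₀ (by linarith))

/-- Theorem 5.2(2): if the basis is shrinking (`V = X*`) then
`wck_X(B_X) ≤ (K+1)²·bc₂((xₙ))`. -/
theorem wck_le_bc2_of_shrinking {X : Type*} [NormedAddCommGroup X]
    [NormedSpace ℝ X] [CompleteSpace X] (hinf : ¬ FiniteDimensional ℝ X)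
    (x : ℕ → X) (f : ℕ → X →L[ℝ] ℝ) (hb : IsSchauderBasis x f)
    (K : ℝ) (hK : K = ⨆ n : ℕ, ‖basisProj x f n‖)
    (hshr : dualSpan f = ⊤) :
    wck X (Metric.closedBall (0 : X) 1) ≤ (K + 1) ^ 2 * bc2 x f :=
  wck_le_bc2_of_shrinking_general x f hb K hK hshr
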